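/- arXiv:1712.00478 — 3 statements merged into one kernel-verified Lean document; each statement's English description precedes it below -/
import Mathlib

section
/- Let K be an infinite compact Hausdorff space. Then the closed unit ball of C(K × {0,1}) (where {0,1} carries the discrete topology) contains a 2-equilateral set of cardinality w(K). -/
/-!
For `f ∈ C(K)` let `f̃ ∈ C(K × {0,1})` be the clamp to `[-1, 1]` of `6f - 3` on `K × {0}` and of
`2 - |6f - 3|` on `K × {1}`. Then `‖f̃ - g̃‖ = 2` as soon as `f` takes the values `1` and `0` at two
points which `g` does not distinguish. If `w(K) > ℵ₀`, a transfinite recursion of length `w(K)`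
produces such functions `f_α`: a family of `λ` continuous functions separating the points of `K`
embeds the compact space `K` into `ℝ^λ`, so `w(K) ≤ max λ ℵ₀`; hence fewer than `w(K)` functions
`f_β` leave two points unseparated, and Urysohn's lemma gives `f_α` equal to `1` and `0` at them.
If `w(K) = ℵ₀`, Urysohn functions supported in a sequence of pairwise disjoint open sets do the
same.
-/

universe u v

open Cardinal

/-- The weight of a topological space: the minimal infinite cardinality of a
base for its topology. -/
noncomputable def weight (X : Type u) [TopologicalSpace X] : Cardinal.{u} :=
  ⨅ B : {B : Set (Set X) // TopologicalSpace.IsTopologicalBasis B}, max #B.1 ℵ₀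

open Set Function TopologicalSpace

section Weight

variable {X : Type u} [TopologicalSpace X]

theorem aleph0_le_weight : ℵ₀ ≤ weight X :=
  have : Nonempty {B : Set (Set X) // IsTopologicalBasis B} := ⟨⟨_, isTopologicalBasis_opens⟩⟩
  le_ciInf fun _ => le_max_right _ _

theorem weight_le_of_isTopologicalBasis {B : Set (Set X)} (hB : IsTopologicalBasis B) :
    weight X ≤ max #B ℵ₀ :=
  ciInf_le' _ (⟨B, hB⟩ : {B : Set (Set X) // IsTopologicalBasis B})

theorem weight_le_of_eq_generateFrom {S : Set (Set X)}
    (hS : ‹TopologicalSpace X› = generateFrom S) : weight X ≤ max #S ℵ₀ := by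
  refine (weight_le_of_isTopologicalBasis (isTopologicalBasis_of_subbasis hS)).trans
    (max_le ?_ (le_max_right _ _))
  have hsub : (fun f => ⋂₀ f) '' {f : Set (Set X) | f.Finite ∧ f ⊆ S} ⊆
      range fun F : Finset S => ⋂₀ (Subtype.val '' (F : Set S)) := by
    rintro _ ⟨f, ⟨hfin, hfS⟩, rfl⟩
    refine ⟨(hfin.preimage Subtype.val_injective.injOn).toFinset, ?_⟩
    simp [inter_eq_right.2 hfS]
  calc _ ≤ #(Finset S) := (mk_le_mk_of_subset hsub).trans mk_range_le
    _ ≤ #(List S) := mk_le_of_surjective List.toFinset_surjective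
    _ ≤ max #S ℵ₀ := (mk_list_le_max S).trans_eq (max_comm _ _)

theorem weight_le_of_eq_iInf_induced {Y : Type*} [TopologicalSpace Y] [SecondCountableTopology Y]
    {ι : Type u} (f : ι → X → Y) (hf : ‹TopologicalSpace X› = ⨅ i, induced (f i) ‹_›) :
    weight X ≤ max #ι ℵ₀ := by
  obtain ⟨b, hbc, -, hb⟩ := exists_countable_basis Y
  have hS : ‹TopologicalSpace X› = generateFrom (⋃ i, preimage (f i) '' b) := by
    rw [generateFrom_iUnion, hf, hb.eq_generateFrom]
    simp_rw [induced_generateFrom_eq]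
  refine (weight_le_of_eq_generateFrom hS).trans (max_le ?_ (le_max_right _ _))
  calc _ ≤ #ι * ⨆ i, #(preimage (f i) '' b) := mk_iUnion_le _
    _ ≤ #ι * ℵ₀ := by
        gcongr
        exact ciSup_le' fun i => (hbc.image _).le_aleph0
    _ ≤ max #ι ℵ₀ := (mul_le_max _ _).trans (by simp)

theorem eq_iInf_induced_of_separatesPoints [CompactSpace X] {Y : Type*} [TopologicalSpace Y]
    [T2Space Y] {ι : Type*} (f : ι → C(X, Y)) (hsep : Pairwise fun x y => ∃ i, f i x ≠ f i y) :
    ‹TopologicalSpace X› = ⨅ i, induced (f i) ‹_› := by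
  have hF : Continuous fun x i => f i x := continuous_pi fun i => (f i).continuous
  have hinj : Injective fun x i => f i x := fun x y hxy => by
    by_contra hne
    obtain ⟨i, hi⟩ := hsep hne
    exact hi (congr_fun hxy i)
  refine (hF.isClosedEmbedding hinj).eq_induced.trans ?_
  simp only [Pi.topologicalSpace, induced_iInf, induced_compose]
  rfl

end Weight

theorem weight_le_of_separatesPoints {X : Type u} [TopologicalSpace X] [CompactSpace X]
    {Y : Type*} [TopologicalSpace Y] [T2Space Y] [SecondCountableTopology Y] {ι : Type u}
    (f : ι → C(X, Y)) (hsep : Pairwise fun x y => ∃ i, f i x ≠ f i y) :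
    weight X ≤ max #ι ℵ₀ :=
  weight_le_of_eq_iInf_induced _ (eq_iInf_induced_of_separatesPoints f hsep)

theorem WellFoundedLT.exists_forall_fix {α β : Type*} [Preorder α] [WellFoundedLT α]
    (P : ∀ a : α, (Iio a → β) → β → Prop) (h : ∀ a prev, ∃ b, P a prev b) :
    ∃ f : α → β, ∀ a, P a (fun c => f c) (f a) := by
  choose step hstep using h
  let f : α → β := wellFounded_lt.fix fun a rec => step a fun c => rec c c.2
  refine ⟨f, fun a => ?_⟩
  rw [show f a = step a fun c => f c from wellFounded_lt.fix_eq _ a]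
  exact hstep _ _

section Equilateral

variable {X : Type u} [TopologicalSpace X] [CompactSpace X]

theorem ContinuousMap.norm_sub_eq_two {f g : C(X, ℝ)} (hf : ‖f‖ ≤ 1) (hg : ‖g‖ ≤ 1) {p : X}
    (hp : |f p - g p| = 2) : ‖f - g‖ = 2 := by
  refine le_antisymm ((norm_sub_le f g).trans (by linarith)) ?_
  rw [← hp, ← Real.norm_eq_abs]
  exact (f - g).norm_coe_le_norm p

theorem exists_equilateral_of_pairwise {ι : Type v} (g : ι → C(X, ℝ)) (hg : ∀ i, ‖g i‖ ≤ 1)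
    (hsep : Pairwise fun i j => ∃ p, |g i p - g j p| = 2) :
    ∃ A : Set C(X, ℝ), A ⊆ Metric.closedBall 0 1 ∧ lift.{v} #A = lift.{u} #ι ∧
      ∀ f ∈ A, ∀ g ∈ A, f ≠ g → ‖f - g‖ = 2 := by
  have hdist : Pairwise fun i j => ‖g i - g j‖ = 2 := fun i j hij => by
    obtain ⟨p, hp⟩ := hsep hij
    exact (g i).norm_sub_eq_two (hg i) (hg j) hp
  have hinj : Injective g := fun i j hij => by
    by_contra hne
    simpa [hij] using hdist hne
  refine ⟨range g, range_subset_iff.2 fun i => mem_closedBall_zero_iff.2 (hg i),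
    mk_range_eq_of_injective hinj, ?_⟩
  rintro _ ⟨i, rfl⟩ _ ⟨j, rfl⟩ hne
  exact hdist (ne_of_apply_ne g hne)

end Equilateral

noncomputable def clampUnit (t : ℝ) : ℝ := max (-1) (min 1 t)

theorem continuous_clampUnit : Continuous clampUnit := by unfold clampUnit; fun_prop

theorem abs_clampUnit_le (t : ℝ) : |clampUnit t| ≤ 1 :=
  abs_le.2 ⟨le_max_left _ _, max_le (by norm_num) (min_le_left _ _)⟩

theorem clampUnit_of_le_neg_one {t : ℝ} (h : t ≤ -1) : clampUnit t = -1 := by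
  unfold clampUnit; grind

theorem clampUnit_of_one_le {t : ℝ} (h : 1 ≤ t) : clampUnit t = 1 := by
  unfold clampUnit; grind

section Doubled

variable {K : Type u} [TopologicalSpace K]

/- On the copy `K × {false}` this is `-1` where `f ≤ 1/3` and `1` where `f ≥ 2/3`; on the copy
`K × {true}` it is `1` where `1/3 ≤ f ≤ 2/3` and `-1` where `f` is `0` or `1`. -/
noncomputable def doubled (f : C(K, ℝ)) : C(K × Bool, ℝ) where
  toFun p := clampUnit (if p.2 then 2 - |6 * f p.1 - 3| else 6 * f p.1 - 3)
  continuous_toFun := continuous_prod_of_discrete_right.2 fun b => by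
    cases b <;> simp only [Bool.false_eq_true, if_true, if_false] <;>
      exact continuous_clampUnit.comp (by fun_prop)

@[simp] theorem doubled_apply_false (f : C(K, ℝ)) (x : K) :
    doubled f (x, false) = clampUnit (6 * f x - 3) := rfl

@[simp] theorem doubled_apply_true (f : C(K, ℝ)) (x : K) :
    doubled f (x, true) = clampUnit (2 - |6 * f x - 3|) := rfl

theorem norm_doubled_le [CompactSpace K] (f : C(K, ℝ)) : ‖doubled f‖ ≤ 1 :=
  (ContinuousMap.norm_le _ zero_le_one).2 fun _ => abs_clampUnit_le _

theorem exists_abs_doubled_sub_eq_two {f g : C(K, ℝ)} {x y : K} (hfx : f x = 1) (hfy : f y = 0)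
    (hg : g x = g y) : ∃ p, |doubled f p - doubled g p| = 2 := by
  rcases le_or_gt (6 * g x - 3) (-1) with hlow | hlow
  · refine ⟨(x, false), ?_⟩
    rw [doubled_apply_false, doubled_apply_false, hfx, clampUnit_of_le_neg_one hlow,
      clampUnit_of_one_le (by norm_num)]
    norm_num
  rcases le_or_gt 1 (6 * g x - 3) with hhigh | hhigh
  · refine ⟨(y, false), ?_⟩
    rw [doubled_apply_false, doubled_apply_false, hfy, ← hg, clampUnit_of_one_le hhigh,
      clampUnit_of_le_neg_one (by norm_num)]
    norm_num
  · refine ⟨(x, true), ?_⟩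
    rw [doubled_apply_true, doubled_apply_true, hfx, clampUnit_of_le_neg_one (by norm_num),
      clampUnit_of_one_le (by linarith [abs_lt.2 ⟨hlow, hhigh⟩])]
    norm_num

end Doubled

section Families

variable {K : Type u} [TopologicalSpace K]

theorem exists_continuous_eq_one_eq_zero [T1Space K] [NormalSpace K] {x y : K} (h : x ≠ y) :
    ∃ f : C(K, ℝ), f x = 1 ∧ f y = 0 := by
  obtain ⟨f, hf0, hf1, -⟩ := exists_continuous_zero_one_of_isClosed isClosed_singleton
    isClosed_singleton (disjoint_singleton.2 h.symm)
  exact ⟨f, hf1 rfl, hf0 rfl⟩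

theorem exists_biorthogonal_nat (K : Type u) [TopologicalSpace K] [T2Space K] [NormalSpace K]
    [Infinite K] :
    ∃ (x : ℕ → K) (f : ℕ → C(K, ℝ)), ∀ m n, f m (x n) = if m = n then 1 else 0 := by
  obtain ⟨U, hUinf, hUo, hdisj⟩ := exists_seq_infinite_isOpen_pairwise_disjoint K
  choose x hx using fun n => (hUinf n).nonempty
  choose f hf0 hf1 _ using fun n => exists_continuous_zero_one_of_isClosed (hUo n).isClosed_compl
    isClosed_singleton (disjoint_singleton_right.2 (not_not.2 (hx n)))
  refine ⟨x, f, fun m n => ?_⟩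
  split_ifs with h
  · exact h ▸ hf1 m rfl
  · exact hf0 m (disjoint_left.1 (hdisj (Ne.symm h)) (hx n))

theorem exists_pairwise_doubled_nat (K : Type u) [TopologicalSpace K] [T2Space K]
    [NormalSpace K] [Infinite K] :
    ∃ f : ℕ → C(K, ℝ), Pairwise fun m n => ∃ p, |doubled (f m) p - doubled (f n) p| = 2 := by
  obtain ⟨x, f, hf⟩ := exists_biorthogonal_nat K
  refine ⟨f, fun m n hmn => exists_abs_doubled_sub_eq_two (x := x m) (y := x (m + n + 1)) ?_ ?_ ?_⟩
  · simp [hf]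
  · rw [hf, if_neg (by omega)]
  · rw [hf, hf, if_neg (Ne.symm hmn), if_neg (by omega)]

theorem exists_pairwise_doubled_of_aleph0_lt_weight [CompactSpace K] [T2Space K]
    (hK : ℵ₀ < weight K) : ∃ f : (weight K).ord.ToType → C(K, ℝ),
      Pairwise fun a b => ∃ p, |doubled (f a) p - doubled (f b) p| = 2 := by
  have hstep : ∀ (a : (weight K).ord.ToType) (prev : Iio a → C(K, ℝ)), ∃ g : C(K, ℝ),
      ∃ x y, g x = 1 ∧ g y = 0 ∧ ∀ c, prev c x = prev c y := by
    intro a prev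
    have hnsep : ¬ Pairwise fun x y => ∃ c, prev c x ≠ prev c y := fun hsep =>
      (weight_le_of_separatesPoints prev hsep).not_gt (max_lt (by simpa using mk_Iio_lt a) hK)
    obtain ⟨x, y, hxy, hxy'⟩ : ∃ x y : K, x ≠ y ∧ ∀ c, prev c x = prev c y := by
      simpa [Pairwise] using hnsep
    obtain ⟨g, hgx, hgy⟩ := exists_continuous_eq_one_eq_zero hxy
    exact ⟨g, x, y, hgx, hgy, hxy'⟩
  obtain ⟨f, hf⟩ := WellFoundedLT.exists_forall_fix _ hstep
  have hlt : ∀ a b, b < a → ∃ p, |doubled (f a) p - doubled (f b) p| = 2 := fun a b hba => by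
    obtain ⟨x, y, hx, hy, hprev⟩ := hf a
    exact exists_abs_doubled_sub_eq_two hx hy (hprev ⟨b, hba⟩)
  refine ⟨f, fun a b hab => ?_⟩
  rcases hab.lt_or_gt with h | h
  · simpa only [abs_sub_comm] using hlt b a h
  · exact hlt a b h

end Families

/-- The closed unit ball of `C(K × {0,1})` contains a `2`-equilateral set of
cardinality `w(K)`. -/
theorem statement2 (K : Type u) [TopologicalSpace K] [CompactSpace K] [T2Space K] [Infinite K] :
    ∃ A : Set C(K × Bool, ℝ), A ⊆ Metric.closedBall 0 1 ∧ #A = weight K ∧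
      ∀ f ∈ A, ∀ g ∈ A, f ≠ g → ‖f - g‖ = 2 := by
  rcases (aleph0_le_weight (X := K)).eq_or_lt with hK | hK
  · obtain ⟨f, hf⟩ := exists_pairwise_doubled_nat K
    obtain ⟨A, hA, hcard, hA2⟩ :=
      exists_equilateral_of_pairwise _ (fun n => norm_doubled_le (f n)) hf
    exact ⟨A, hA, by simpa [← hK] using hcard, hA2⟩
  · obtain ⟨f, hf⟩ := exists_pairwise_doubled_of_aleph0_lt_weight hK
    obtain ⟨A, hA, hcard, hA2⟩ :=
      exists_equilateral_of_pairwise _ (fun a => norm_doubled_le (f a)) hf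
    exact ⟨A, hA, by simpa using hcard, hA2⟩
end

section
/- Let K be a compact Hausdorff space and κ an infinite cardinal. If there exists a closed subset L ⊆ K such that the pseudo-character ψ(L, K) is at least κ (i.e., L is not the intersection of fewer than κ open subsets of K), then there exists a right-separated family {x_α : α < κ} in K of cardinality κ. -/
/-!
By transfinite recursion choose, for every `α < κ`, a point `x α` and an open `U α ⊇ L` with
`x α ∉ closure (U α)` and `x α ∈ ⋂_{β < α} U β`. This is possible because the intersection of the
fewer than `κ` open sets `U β` is strictly larger than `L` by the pseudo-character bound, and a
point outside the closed set `L` of the regular space `K` is separated from `L` by an open set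
whose closure misses it. Every later point lies in `U α`, so `x α` is not in their closure.
-/

open Cardinal

/-- A family of points indexed by a linearly ordered type is left-separated if no point lies in
the closure of the set of points with smaller index. -/
def LeftSeparated {X : Type u} [TopologicalSpace X] {ι : Type v} [LT ι] (x : ι → X) : Prop :=
  ∀ a : ι, x a ∉ closure (x '' {b | b < a})

/-- A family of points indexed by a linearly ordered type is right-separated if no point lies in
the closure of the set of points with larger index. -/
def RightSeparated {X : Type u} [TopologicalSpace X] {ι : Type v} [LT ι] (x : ι → X) : Prop :=
  ∀ a : ι, x a ∉ closure (x '' {b | a < b})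

open Set Filter Topology

theorem exists_family_of_forall_Iio_exists {ι α : Type*} [Preorder ι] [WellFoundedLT ι]
    (P : α → Prop) (r : α → α → Prop)
    (h : ∀ (a : ι) (f : Iio a → α), (∀ b, P (f b)) → ∃ y, P y ∧ ∀ b, r (f b) y) :
    ∃ f : ι → α, (∀ a, P (f a)) ∧ ∀ a b, a < b → r (f a) (f b) := by
  choose next hnextP hnextr using h
  let F : ι → Subtype P := WellFoundedLT.fix fun a rec =>
    ⟨next a (fun b => rec b.1 b.2) (fun b => (rec b.1 b.2).2), hnextP _ _ _⟩
  refine ⟨fun a => F a, fun a => (F a).2, fun a b hab => ?_⟩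
  have hFb : F b = _ := WellFoundedLT.fix_eq _ b
  simp only [hFb]
  exact hnextr b (fun c => F c) (fun c => (F c).2) ⟨a, hab⟩

theorem rightSeparated_of_forall_lt_mem {X ι : Type*} [TopologicalSpace X] [LT ι]
    {x : ι → X} {U : ι → Set X} (hxU : ∀ a, x a ∉ closure (U a))
    (hmem : ∀ a b, a < b → x b ∈ U a) : RightSeparated x := fun a hx =>
  hxU a <| closure_mono (image_subset_iff.mpr fun _ => hmem a _) hx

theorem exists_isOpen_superset_notMem_closure {X : Type*} [TopologicalSpace X] [RegularSpace X]
    {L : Set X} {x : X} (hL : IsClosed L) (hx : x ∉ L) :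
    ∃ U, IsOpen U ∧ L ⊆ U ∧ x ∉ closure U := by
  have : Disjoint (𝓝ˢ L) (𝓝 x) := disjoint_nhdsSet_nhds.mpr (by rwa [hL.closure_eq])
  obtain ⟨U, ⟨hU, hLU⟩, hUx⟩ := (hasBasis_nhdsSet L).disjoint_iff_left.mp this
  refine ⟨U, hU, hLU, ?_⟩
  rwa [← mem_compl_iff, ← interior_compl, mem_interior_iff_mem_nhds]

theorem exists_mem_sInter_notMem_of_mk_lt {X : Type u} [TopologicalSpace X] {L : Set X}
    {κ : Cardinal.{u}} (hpsi : ∀ 𝒰 : Set (Set X), (∀ U ∈ 𝒰, IsOpen U) → ⋂₀ 𝒰 = L → κ ≤ #𝒰)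
    {𝒰 : Set (Set X)} (hopen : ∀ U ∈ 𝒰, IsOpen U) (hL : ∀ U ∈ 𝒰, L ⊆ U) (hcard : #𝒰 < κ) :
    ∃ x ∈ ⋂₀ 𝒰, x ∉ L := by
  by_contra! h
  exact hcard.not_ge <| hpsi 𝒰 hopen <| Subset.antisymm h (subset_sInter hL)

theorem statement13_general (K : Type u) [TopologicalSpace K] [CompactSpace K] [T2Space K]
    (κ : Cardinal.{u}) (L : Set K) (hL : IsClosed L)
    (hpsi : ∀ 𝒰 : Set (Set K), (∀ U ∈ 𝒰, IsOpen U) → ⋂₀ 𝒰 = L → κ ≤ #𝒰) :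
    ∃ x : κ.ord.ToType → K, RightSeparated x := by
  let Approved (p : K × Set K) : Prop := IsOpen p.2 ∧ L ⊆ p.2 ∧ p.1 ∉ closure p.2
  have step : ∀ (a : κ.ord.ToType) (f : Iio a → K × Set K), (∀ b, Approved (f b)) →
      ∃ q, Approved q ∧ ∀ b, q.1 ∈ (f b).2 := by
    intro a f hf
    obtain ⟨x, hx, hxL⟩ := exists_mem_sInter_notMem_of_mk_lt hpsi
      (𝒰 := range fun b => (f b).2) (forall_mem_range.mpr fun b => (hf b).1)
      (forall_mem_range.mpr fun b => (hf b).2.1)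
      (mk_range_le.trans_lt (by simpa using mk_Iio_lt a))
    obtain ⟨U, hU, hLU, hxU⟩ := exists_isOpen_superset_notMem_closure hL hxL
    exact ⟨(x, U), ⟨hU, hLU, hxU⟩, fun b => hx _ ⟨b, rfl⟩⟩
  obtain ⟨p, hp, hmem⟩ := exists_family_of_forall_Iio_exists Approved (fun p q => q.1 ∈ p.2) step
  exact ⟨_, rightSeparated_of_forall_lt_mem (fun a => (hp a).2.2) hmem⟩

/-- If a compact Hausdorff space `K` has a closed subset `L` with pseudo-character at least
`κ` (that is, `L` is not the intersection of fewer than `κ` open subsets of `K`), then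
`K` contains a right-separated family indexed by the ordinals below `κ`. -/
theorem statement13 (K : Type u) [TopologicalSpace K] [CompactSpace K] [T2Space K]
    (κ : Cardinal.{u}) (hκ : ℵ₀ ≤ κ) (L : Set K) (hL : IsClosed L)
    (hpsi : ∀ 𝒰 : Set (Set K), (∀ U ∈ 𝒰, IsOpen U) → ⋂₀ 𝒰 = L → κ ≤ #𝒰) :
    ∃ x : κ.ord.ToType → K, RightSeparated x :=
  statement13_general K κ L hL hpsi
end

section
/- Let K be an infinite compact Hausdorff space, let κ be an infinite cardinal, and let L be either a closed subspace of K or a continuous image of K (i.e., there is a continuous surjection from K onto L). If the closed unit ball of C(L) contains a (1+)-separated (respectively, 2-equilateral) set of cardinality κ, then the closed unit ball of C(K) contains a (1+)-separated (respectively, 2-equilateral) set of cardinality κ. -/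
/-!
Both hypotheses on `L` give a map `T : C(L) → C(K)` with `‖T f‖ ≤ ‖f‖` and
`‖f - g‖ ≤ ‖T f - T g‖`: composition with the surjection, which is even a linear isometry, or a
norm-preserving Tietze extension along the closed embedding, which is undone by restriction.
Such a map is injective and sends the unit ball into the unit ball without decreasing distances,
so it carries a `(1+)`-separated set to one of the same cardinality. Since distances in the unit
ball are at most `2`, it also carries `2`-equilateral sets to `2`-equilateral sets.
-/

open Cardinal Set Metric

section Transfer

variable {E F : Type u} [NormedAddCommGroup E] [SeminormedAddCommGroup F]

theorem norm_sub_le_two_of_mem_closedBall {x y : F} (hx : x ∈ closedBall 0 1)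
    (hy : y ∈ closedBall 0 1) : ‖x - y‖ ≤ 2 := by
  rw [mem_closedBall_zero_iff] at hx hy
  linarith [norm_sub_le x y]

theorem pairwise_norm_sub_eq_two_iff {A : Set F} (hA : A ⊆ closedBall 0 1) :
    A.Pairwise (fun x y => ‖x - y‖ = 2) ↔ A.Pairwise (fun x y => 2 ≤ ‖x - y‖) :=
  ⟨fun h _ hx _ hy hxy => (h hx hy hxy).ge, fun h _ hx _ hy hxy =>
    (norm_sub_le_two_of_mem_closedBall (hA hx) (hA hy)).antisymm (h hx hy hxy)⟩

theorem exists_pairwise_norm_sub_of_le_norm_sub_map (T : E → F) (hT_norm : ∀ x, ‖T x‖ ≤ ‖x‖)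
    (hT_sub : ∀ x y, ‖x - y‖ ≤ ‖T x - T y‖) {P : ℝ → Prop} (hP : Monotone P) {A : Set E}
    (hA : A ⊆ closedBall 0 1) (hAP : A.Pairwise fun x y => P ‖x - y‖) :
    ∃ B ⊆ closedBall (0 : F) 1, #B = #A ∧ B.Pairwise fun x y => P ‖x - y‖ := by
  have hT_inj : Function.Injective T := fun x y hxy =>
    sub_eq_zero.mp (norm_le_zero_iff.mp (by simpa [hxy] using hT_sub x y))
  refine ⟨T '' A, ?_, mk_image_eq hT_inj, ?_⟩
  · rintro _ ⟨x, hx, rfl⟩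
    exact mem_closedBall_zero_iff.mpr ((hT_norm x).trans (mem_closedBall_zero_iff.mp (hA hx)))
  · exact hT_inj.injOn.pairwise_image.mpr
      fun x hx y hy hxy => hP (hT_sub x y) (hAP hx hy hxy)

end Transfer

namespace ContinuousMap

variable {X Y G : Type*} [TopologicalSpace X] [CompactSpace X] [TopologicalSpace Y] [CompactSpace Y]
  [SeminormedAddCommGroup G]

theorem norm_comp_le (f : C(Y, G)) (e : C(X, Y)) : ‖f.comp e‖ ≤ ‖f‖ :=
  ((f.comp e).norm_le (norm_nonneg f)).mpr fun x => f.norm_coe_le_norm (e x)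

theorem norm_comp_of_surjective (f : C(Y, G)) {e : C(X, Y)} (he : Function.Surjective e) :
    ‖f.comp e‖ = ‖f‖ := by
  refine (norm_comp_le f e).antisymm ((f.norm_le (norm_nonneg _)).mpr fun y => ?_)
  obtain ⟨x, rfl⟩ := he y
  exact (f.comp e).norm_coe_le_norm x

theorem exists_norm_le_comp_eq_of_isClosedEmbedding [NormalSpace Y] {e : X → Y}
    (he : Topology.IsClosedEmbedding e) (f : C(X, ℝ)) :
    ∃ g : C(Y, ℝ), ‖g‖ ≤ ‖f‖ ∧ g.comp ⟨e, he.continuous⟩ = f := by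
  obtain ⟨g, hg_mem, hg⟩ := exists_extension_forall_mem_of_isClosedEmbedding f
    (t := Icc (-‖f‖) ‖f‖) (fun x => abs_le.mp (f.norm_coe_le_norm x))
    (nonempty_Icc.mpr (neg_le_self (norm_nonneg f))) he
  exact ⟨g, (g.norm_le (norm_nonneg f)).mpr fun y => abs_le.mpr (hg_mem y),
    ContinuousMap.ext (congrFun hg)⟩

end ContinuousMap

section ExpandingMaps

variable {K L : Type u} [TopologicalSpace K] [CompactSpace K] [TopologicalSpace L] [CompactSpace L]

theorem exists_le_norm_sub_map_of_isClosedEmbedding [NormalSpace K] {e : L → K}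
    (he : Topology.IsClosedEmbedding e) :
    ∃ T : C(L, ℝ) → C(K, ℝ), (∀ f, ‖T f‖ ≤ ‖f‖) ∧ ∀ f g, ‖f - g‖ ≤ ‖T f - T g‖ := by
  choose T hT_norm hT_comp using ContinuousMap.exists_norm_le_comp_eq_of_isClosedEmbedding he
  refine ⟨T, hT_norm, fun f g => ?_⟩
  calc ‖f - g‖ = ‖(T f - T g).comp ⟨e, he.continuous⟩‖ := by
        rw [ContinuousMap.sub_comp, hT_comp, hT_comp]
    _ ≤ ‖T f - T g‖ := ContinuousMap.norm_comp_le _ _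

theorem exists_le_norm_sub_map_of_surjective {φ : K → L} (hφ : Continuous φ)
    (hφ_surj : Function.Surjective φ) :
    ∃ T : C(L, ℝ) → C(K, ℝ), (∀ f, ‖T f‖ ≤ ‖f‖) ∧ ∀ f g, ‖f - g‖ ≤ ‖T f - T g‖ := by
  let Φ : C(K, L) := ⟨φ, hφ⟩
  refine ⟨fun f => f.comp Φ, fun f => (f.norm_comp_of_surjective hφ_surj).le, fun f g => ?_⟩
  rw [← ContinuousMap.sub_comp, (f - g).norm_comp_of_surjective hφ_surj]

end ExpandingMaps

theorem statement18_general (K : Type u) [TopologicalSpace K] [CompactSpace K] [T2Space K]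
    (L : Type u) [TopologicalSpace L] [CompactSpace L]
    (κ : Cardinal.{u})
    (h : (∃ s : Set K, IsClosed s ∧ Nonempty (L ≃ₜ s)) ∨
      (∃ φ : K → L, Continuous φ ∧ Function.Surjective φ)) :
    ((∃ A : Set C(L, ℝ), A ⊆ Metric.closedBall 0 1 ∧ #A = κ ∧
        ∀ f ∈ A, ∀ g ∈ A, f ≠ g → 1 < ‖f - g‖) →
      (∃ A : Set C(K, ℝ), A ⊆ Metric.closedBall 0 1 ∧ #A = κ ∧
        ∀ f ∈ A, ∀ g ∈ A, f ≠ g → 1 < ‖f - g‖)) ∧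
    ((∃ A : Set C(L, ℝ), A ⊆ Metric.closedBall 0 1 ∧ #A = κ ∧
        ∀ f ∈ A, ∀ g ∈ A, f ≠ g → ‖f - g‖ = 2) →
      (∃ A : Set C(K, ℝ), A ⊆ Metric.closedBall 0 1 ∧ #A = κ ∧
        ∀ f ∈ A, ∀ g ∈ A, f ≠ g → ‖f - g‖ = 2)) := by
  obtain ⟨T, hT_norm, hT_sub⟩ : ∃ T : C(L, ℝ) → C(K, ℝ),
      (∀ f, ‖T f‖ ≤ ‖f‖) ∧ ∀ f g, ‖f - g‖ ≤ ‖T f - T g‖ := by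
    rcases h with ⟨s, hs, ⟨e⟩⟩ | ⟨φ, hφ, hφ_surj⟩
    · exact exists_le_norm_sub_map_of_isClosedEmbedding
        (hs.isClosedEmbedding_subtypeVal.comp e.isClosedEmbedding)
    · exact exists_le_norm_sub_map_of_surjective hφ hφ_surj
  constructor
  · rintro ⟨A, hA, rfl, hAP⟩
    exact exists_pairwise_norm_sub_of_le_norm_sub_map T hT_norm hT_sub
      (fun _ _ hab h => h.trans_le hab) hA hAP
  · rintro ⟨A, hA, rfl, hAP⟩
    obtain ⟨B, hB, hcard, hBP⟩ := exists_pairwise_norm_sub_of_le_norm_sub_map T hT_norm hT_sub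
      (fun _ _ hab h => h.trans hab) hA ((pairwise_norm_sub_eq_two_iff hA).mp hAP)
    exact ⟨B, hB, hcard, (pairwise_norm_sub_eq_two_iff hB).mpr hBP⟩

/-- If `L` is a closed subspace of `K` or a continuous image of `K`, then any `(1+)`-separated
(respectively `2`-equilateral) set of cardinality `κ` in the closed unit ball of `C(L)` yields
one in the closed unit ball of `C(K)`. -/
theorem statement18 (K : Type u) [TopologicalSpace K] [CompactSpace K] [T2Space K] [Infinite K]
    (L : Type u) [TopologicalSpace L] [CompactSpace L] [T2Space L] [Infinite L]
    (κ : Cardinal.{u}) (hκ : ℵ₀ ≤ κ)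
    (h : (∃ s : Set K, IsClosed s ∧ Nonempty (L ≃ₜ s)) ∨
      (∃ φ : K → L, Continuous φ ∧ Function.Surjective φ)) :
    ((∃ A : Set C(L, ℝ), A ⊆ Metric.closedBall 0 1 ∧ #A = κ ∧
        ∀ f ∈ A, ∀ g ∈ A, f ≠ g → 1 < ‖f - g‖) →
      (∃ A : Set C(K, ℝ), A ⊆ Metric.closedBall 0 1 ∧ #A = κ ∧
        ∀ f ∈ A, ∀ g ∈ A, f ≠ g → 1 < ‖f - g‖)) ∧
    ((∃ A : Set C(L, ℝ), A ⊆ Metric.closedBall 0 1 ∧ #A = κ ∧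
        ∀ f ∈ A, ∀ g ∈ A, f ≠ g → ‖f - g‖ = 2) →
      (∃ A : Set C(K, ℝ), A ⊆ Metric.closedBall 0 1 ∧ #A = κ ∧
        ∀ f ∈ A, ∀ g ∈ A, f ≠ g → ‖f - g‖ = 2)) :=
  statement18_general K L κ h
end
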